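/- Let d, p, k be integers with p ≥ 1, d ≥ 2p+1 and 1 ≤ k ≤ p. Then p² + 2(1−d)p + d(d−1) > 0, the bracket −k(p² + 2(1−d)p + d(d−1)) + p² is a strictly decreasing function of k, and k·( −k(p² + 2(1−d)p + d(d−1)) + p² ) < 0. (Writing d = 2p + s with s ≥ 1, the bracket at k = 1 equals −s(s+2p−1) < 0.) -/
import Mathlib


/-- Key negativity estimate: for integers `p ≥ 1`, `d ≥ 2p+1`, `1 ≤ k ≤ p`, the
coefficient `p² + 2(1−d)p + d(d−1)` is positive, the bracket
`−k(p² + 2(1−d)p + d(d−1)) + p²` is a strictly decreasing function of `k`, and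
`k(−k(p² + 2(1−d)p + d(d−1)) + p²) < 0`. Writing `d = 2p + s` (so `s = d − 2p ≥ 1`),
the bracket at `k = 1` equals `−s(s + 2p − 1) < 0`. -/
theorem bracket_negative (p d k : ℤ) (hp : 1 ≤ p) (hd : 2 * p + 1 ≤ d)
    (hk1 : 1 ≤ k) (hk2 : k ≤ p) :
    0 < p ^ 2 + 2 * (1 - d) * p + d * (d - 1) ∧
    (∀ k₁ k₂ : ℤ, k₁ < k₂ →
      -k₂ * (p ^ 2 + 2 * (1 - d) * p + d * (d - 1)) + p ^ 2
        < -k₁ * (p ^ 2 + 2 * (1 - d) * p + d * (d - 1)) + p ^ 2) ∧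
    k * (-k * (p ^ 2 + 2 * (1 - d) * p + d * (d - 1)) + p ^ 2) < 0 ∧
    (-1 * (p ^ 2 + 2 * (1 - d) * p + d * (d - 1)) + p ^ 2
        = -(d - 2 * p) * ((d - 2 * p) + 2 * p - 1) ∧
      -(d - 2 * p) * ((d - 2 * p) + 2 * p - 1) < 0) := by
  have hQ : 0 < p ^ 2 + 2 * (1 - d) * p + d * (d - 1) := by nlinarith [sq_nonneg (d - 2*p), sq_nonneg (d - p)]
  refine ⟨hQ, fun k₁ k₂ h => by nlinarith, ?_, by ring, by nlinarith⟩
  have h1 : -k * (p ^ 2 + 2 * (1 - d) * p + d * (d - 1)) + p ^ 2 < 0 := by nlinarith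
  nlinarith
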